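/- Let (R, m, k) be a commutative Noetherian local ring which is not regular and suppose the residue field k admits an exact sequence 0 → X → G → k → 0 with G totally reflexive and X free of finite rank. Then depth R ≤ 1. -/

import Mathlib

open CategoryTheory IsLocalRing Pointwise

noncomputable section

/-- The `i`-th Ext group of `M` and `N` over `R`. -/
abbrev extGroup (R : Type) [CommRing R] (M N : Type) [AddCommGroup M] [Module R M]
    [AddCommGroup N] [Module R N] (i : ℕ) : Type :=
  ((Ext R (ModuleCat R) i).obj (Opposite.op (ModuleCat.of R M))).obj (ModuleCat.of R N)

/-- The `i`-th Tor group of `M` and `N` over `R`. -/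
abbrev torGroup (R : Type) [CommRing R] (M N : Type) [AddCommGroup M] [Module R M]
    [AddCommGroup N] [Module R N] (i : ℕ) : Type :=
  ((Tor (ModuleCat R) i).obj (ModuleCat.of R M)).obj (ModuleCat.of R N)

/-- The depth of a module over a local ring, defined via vanishing of `Ext(k, M)`;
it is `⊤` if no Ext module is nonzero. -/
def eDepth (R : Type) [CommRing R] [IsLocalRing R] (M : Type) [AddCommGroup M] [Module R M] :
    ℕ∞ :=
  sInf ((↑) '' {i : ℕ | Nontrivial (extGroup R (ResidueField R) M i)})

/-- The projective dimension of a module, via vanishing of Ext; `⊤` if not finite. -/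
def ePd (R : Type) [CommRing R] (M : Type) [AddCommGroup M] [Module R M] : ℕ∞ :=
  sInf ((↑) '' {n : ℕ | ∀ (N : ModuleCat R) (i : ℕ), n < i →
    Subsingleton (((Ext R (ModuleCat R) i).obj (Opposite.op (ModuleCat.of R M))).obj N)})

/-- A local ring is regular if its maximal ideal is generated by `dim R` many elements. -/
def IsRegularLocal (R : Type) [CommRing R] [IsLocalRing R] : Prop :=
  ∃ s : Finset R, Ideal.span (s : Set R) = maximalIdeal R ∧
    (s.card : WithBot (WithTop ℕ)) = ringKrullDim R

/-- A local ring is Gorenstein if `R` has finite injective dimension as a module over itself,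
expressed via vanishing of `Ext^i(-, R)` for all `i` large. -/
def IsGorensteinLocal (R : Type) [CommRing R] [IsLocalRing R] : Prop :=
  ∃ n : ℕ, ∀ (N : ModuleCat R) (i : ℕ), n < i →
    Subsingleton (((Ext R (ModuleCat R) i).obj (Opposite.op N)).obj (ModuleCat.of R R))

/-- A module is totally reflexive (of Gorenstein dimension zero) if it is finitely
generated, the evaluation map into the double dual is bijective, and
`Ext^i(M, R) = Ext^i(M*, R) = 0` for all `i ≥ 1`. -/
def IsTotallyReflexive (R : Type) [CommRing R] (M : Type) [AddCommGroup M] [Module R M] : Prop :=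
  Module.Finite R M ∧ Function.Bijective (Module.Dual.eval R M) ∧
    (∀ i : ℕ, 1 ≤ i → Subsingleton (extGroup R M R i)) ∧
    (∀ i : ℕ, 1 ≤ i → Subsingleton (extGroup R (Module.Dual R M) R i))

/-- The minimal number of generators of a module. -/
def mu (R : Type) [CommRing R] (M : Type) [AddCommGroup M] [Module R M] : ℕ :=
  sInf {n : ℕ | ∃ s : Finset M, s.card = n ∧ Submodule.span R (s : Set M) = ⊤}


namespace StmtAux
open CategoryTheory.Limits
section
variable {R : Type} [CommRing R]


theorem exactAt_of_subsingleton (M Y : ModuleCat R) (n : ℕ) (P : ProjectiveResolution M)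
    (h : Subsingleton (((Ext R (ModuleCat R) n).obj (Opposite.op M)).obj Y)) :
    ((P.complex.linearYonedaObj R Y)).ExactAt n := by
  rw [HomologicalComplex.exactAt_iff_isZero_homology]
  exact (ModuleCat.isZero_of_subsingleton _).of_iso (P.isoExt n Y).symm

theorem deg0 {M Y : ModuleCat R} (P : ProjectiveResolution M)
    (h : ((P.complex.linearYonedaObj R Y)).ExactAt 0)
    (ψ : P.complex.X 0 ⟶ Y) (hψ : P.complex.d 1 0 ≫ ψ = 0) : ψ = 0 := by
  rw [HomologicalComplex.exactAt_iff,
    ShortComplex.exact_iff_of_iso ((P.complex.linearYonedaObj R Y).isoSc' 0 0 1 (by simp) (by simp)),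
    ShortComplex.moduleCat_exact_iff] at h
  obtain ⟨y, hy⟩ := h ψ (by exact hψ)
  rw [← hy]
  have hs : (P.complex.linearYonedaObj R Y).d 0 0 = 0 :=
    (P.complex.linearYonedaObj R Y).shape 0 0 (by simp)
  change ((P.complex.linearYonedaObj R Y).d 0 0).hom y = 0
  rw [hs]; rfl

theorem deg1 {M Y : ModuleCat R} (P : ProjectiveResolution M)
    (h : ((P.complex.linearYonedaObj R Y)).ExactAt 1)
    (c : P.complex.X 1 ⟶ Y) (hc : P.complex.d 2 1 ≫ c = 0) :
    ∃ η : P.complex.X 0 ⟶ Y, P.complex.d 1 0 ≫ η = c := by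
  rw [HomologicalComplex.exactAt_iff' _ 0 1 2 (by simp) (by simp)] at h
  rw [ShortComplex.moduleCat_exact_iff] at h
  obtain ⟨η, hη⟩ := h c (by exact hc)
  exact ⟨η, hη⟩

/-- the augmentation -/
def aug {M : ModuleCat R} (P : ProjectiveResolution M) : P.complex.X 0 ⟶ M :=
  P.π.f 0 ≫ (HomologicalComplex.singleObjXSelf (ComplexShape.down ℕ) 0 M).hom

instance aug_epi {M : ModuleCat R} (P : ProjectiveResolution M) : Epi (aug P) := by
  unfold aug; infer_instance

theorem aug_surjective {M : ModuleCat R} (P : ProjectiveResolution M) :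
    Function.Surjective (aug P) :=
  (ModuleCat.epi_iff_surjective _).mp (aug_epi P)

theorem d_comp_aug {M : ModuleCat R} (P : ProjectiveResolution M) :
    P.complex.d 1 0 ≫ aug P = 0 := by
  unfold aug
  rw [← Category.assoc, P.complex_d_comp_π_f_zero, zero_comp]

theorem aug_exact {M : ModuleCat R} (P : ProjectiveResolution M) (x : P.complex.X 0)
    (hx : aug P x = 0) : ∃ z, P.complex.d 1 0 z = x := by
  have hex1 : (ShortComplex.mk (P.complex.d 1 0) (P.π.f 0) P.complex_d_comp_π_f_zero).Exact :=
    ShortComplex.exact_of_g_is_cokernel _ P.isColimitCokernelCofork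
  have hex : (ShortComplex.mk (P.complex.d 1 0) (aug P) (d_comp_aug P)).Exact := by
    rw [ShortComplex.exact_iff_of_iso (ShortComplex.isoMk (Iso.refl _) (Iso.refl _)
      (HomologicalComplex.singleObjXSelf (ComplexShape.down ℕ) 0 M).symm
      (by simp) (by simp [aug]))]
    exact hex1
  rw [ShortComplex.moduleCat_exact_iff] at hex
  exact hex x hx

theorem ext0_zero {M Y : ModuleCat R}
    (h : Subsingleton (((Ext R (ModuleCat R) 0).obj (Opposite.op M)).obj Y))
    (φ : M ⟶ Y) : φ = 0 := by
  let P := ProjectiveResolution.of M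
  have h0 := exactAt_of_subsingleton M Y 0 P h
  have hψ : P.complex.d 1 0 ≫ (aug P ≫ φ) = 0 := by
    rw [← Category.assoc, d_comp_aug, zero_comp]
  have := deg0 P h0 (aug P ≫ φ) hψ
  rw [← cancel_epi (aug P), comp_zero]
  exact this

theorem ext1_lift {A B M Y : ModuleCat R} (i : A ⟶ B) (p : B ⟶ M)
    (hi : Function.Injective i) (hp : Function.Surjective p)
    (hker : ∀ b, p b = 0 → ∃ a, i a = b) (hcomp : ∀ a, p (i a) = 0)
    (h1 : Subsingleton (((Ext R (ModuleCat R) 1).obj (Opposite.op M)).obj Y))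
    (φ : A ⟶ Y) : ∃ ψ : B ⟶ Y, ∀ a, ψ (i a) = φ a := by
  classical
  let P := ProjectiveResolution.of M
  have hex1 := exactAt_of_subsingleton M Y 1 P h1
  have hpepi : Epi p := (ModuleCat.epi_iff_surjective p).mpr hp
  let σ : P.complex.X 0 ⟶ B := Projective.factorThru (aug P) p
  have hσ : σ ≫ p = aug P := Projective.factorThru_comp _ _
  have hσ' : ∀ x, p (σ x) = aug P x := fun x => by
    rw [← hσ]; rfl
  have hd0 : ∀ z : P.complex.X 1, aug P (P.complex.d 1 0 z) = 0 := fun z => by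
    have := d_comp_aug P
    calc aug P (P.complex.d 1 0 z) = (P.complex.d 1 0 ≫ aug P) z := rfl
    _ = 0 := by rw [this]; rfl
  let e := LinearEquiv.ofInjective i.hom hi
  have hmem : ∀ z : P.complex.X 1, σ (P.complex.d 1 0 z) ∈ LinearMap.range i.hom := by
    intro z
    obtain ⟨a, ha⟩ := hker (σ (P.complex.d 1 0 z)) (by rw [hσ', hd0])
    exact ⟨a, ha⟩
  let t : P.complex.X 1 →ₗ[R] ↥(LinearMap.range i.hom) :=
    LinearMap.codRestrict _ (σ.hom ∘ₗ (P.complex.d 1 0).hom) hmem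
  let τ : P.complex.X 1 →ₗ[R] A := (e.symm : _ →ₗ[R] _) ∘ₗ t
  have hτ : ∀ z, i (τ z) = σ (P.complex.d 1 0 z) := by
    intro z
    have h2 : ((e (e.symm (t z))) : B) = ((t z) : B) := congrArg Subtype.val (e.apply_symm_apply (t z))
    rw [LinearEquiv.ofInjective_apply] at h2
    exact h2
  let c : P.complex.X 1 ⟶ Y := ModuleCat.ofHom ((φ.hom : A →ₗ[R] Y) ∘ₗ τ)
  have hc : P.complex.d 2 1 ≫ c = 0 := by
    ext w
    have hdd : P.complex.d 1 0 (P.complex.d 2 1 w) = 0 := by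
      calc P.complex.d 1 0 (P.complex.d 2 1 w) = (P.complex.d 2 1 ≫ P.complex.d 1 0) w := rfl
      _ = 0 := by rw [HomologicalComplex.d_comp_d]; rfl
    have hτ0 : τ (P.complex.d 2 1 w) = 0 := by
      apply hi
      rw [hτ, hdd, map_zero, map_zero]
    show φ (τ (P.complex.d 2 1 w)) = 0
    rw [hτ0, map_zero]
  obtain ⟨η, hη⟩ := deg1 P hex1 c hc
  have hη' : ∀ z, η (P.complex.d 1 0 z) = φ (τ z) := fun z => by
    calc η (P.complex.d 1 0 z) = (P.complex.d 1 0 ≫ η) z := rfl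
    _ = c z := by rw [hη]
    _ = φ (τ z) := rfl
  -- η agrees with φ via i on the kernel of aug
  have hkey : ∀ x : P.complex.X 0, aug P x = 0 → ∀ a : A, i a = σ x → η x = φ a := by
    intro x hx a ha
    obtain ⟨z, hz⟩ := aug_exact P x hx
    have : i (τ z) = i a := by rw [hτ, hz, ha]
    rw [← hz, hη', hi this]
  -- now build ψ
  let Θ : (P.complex.X 0 × A) →ₗ[R] B := LinearMap.coprod σ.hom i.hom
  have hΘsurj : Function.Surjective Θ := by
    intro b
    obtain ⟨x, hx⟩ := aug_surjective P (p b)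
    obtain ⟨a, ha⟩ := hker (b - σ x) (by rw [map_sub, hσ', hx, sub_self])
    exact ⟨(x, a), by simp [Θ, LinearMap.coprod_apply, ha]⟩
  let Λ : (P.complex.X 0 × A) →ₗ[R] Y := LinearMap.coprod η.hom φ.hom
  have hle : LinearMap.ker Θ ≤ LinearMap.ker Λ := by
    rintro ⟨x, a⟩ hv
    have hv' : σ x + i a = 0 := hv
    have hpx : aug P x = 0 := by
      have := congrArg p hv'
      rw [map_add, map_zero, hσ', hcomp, add_zero] at this
      exact this
    have hia : i (-a) = σ x := by
      rw [map_neg]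
      exact (eq_neg_of_add_eq_zero_left hv').symm
    have := hkey x hpx (-a) hia
    show η x + φ a = 0
    rw [this, map_neg, neg_add_cancel]
  let ψ : B ⟶ Y := ModuleCat.ofHom (((LinearMap.ker Θ).liftQ Λ hle) ∘ₗ (Θ.quotKerEquivOfSurjective hΘsurj).symm.toLinearMap)
  have hψΘ : ∀ v, ψ (Θ v) = Λ v := by
    intro v
    have : (Θ.quotKerEquivOfSurjective hΘsurj).symm (Θ v) = Submodule.Quotient.mk v := by
      apply (Θ.quotKerEquivOfSurjective hΘsurj).injective
      simp [LinearMap.quotKerEquivOfSurjective]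
    show ((LinearMap.ker Θ).liftQ Λ hle) ((Θ.quotKerEquivOfSurjective hΘsurj).symm (Θ v)) = Λ v
    rw [this, Submodule.liftQ_apply]
  refine ⟨ψ, fun a => ?_⟩
  have h1' : i.hom a = Θ (0, a) := by simp [Θ, LinearMap.coprod_apply]
  calc ψ (i a) = ψ (Θ (0, a)) := by rw [← h1']
  _ = Λ (0, a) := hψΘ _
  _ = φ a := by simp [Λ, LinearMap.coprod_apply]


def myFactor {B M Y : Type} [AddCommGroup B] [Module R B] [AddCommGroup M] [Module R M]
    [AddCommGroup Y] [Module R Y] (p : B →ₗ[R] M) (hp : Function.Surjective p)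
    (ψ : B →ₗ[R] Y) (h : LinearMap.ker p ≤ LinearMap.ker ψ) : M →ₗ[R] Y :=
  (LinearMap.ker p).liftQ ψ h ∘ₗ (p.quotKerEquivOfSurjective hp).symm.toLinearMap

theorem myFactor_comp {B M Y : Type} [AddCommGroup B] [Module R B] [AddCommGroup M] [Module R M]
    [AddCommGroup Y] [Module R Y] (p : B →ₗ[R] M) (hp : Function.Surjective p)
    (ψ : B →ₗ[R] Y) (h : LinearMap.ker p ≤ LinearMap.ker ψ) (b : B) :
    myFactor p hp ψ h (p b) = ψ b := by
  have : (p.quotKerEquivOfSurjective hp).symm (p b) = Submodule.Quotient.mk b := by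
    apply (p.quotKerEquivOfSurjective hp).injective
    simp [LinearMap.quotKerEquivOfSurjective]
  simp [myFactor, this]


end

theorem main_contra (R : Type) [CommRing R] [IsLocalRing R]
    (X G : Type) [AddCommGroup X] [Module R X] [Module.Finite R X] [Module.Free R X]
    [AddCommGroup G] [Module R G]
    (hGev : Function.Bijective (Module.Dual.eval R G))
    (f : X →ₗ[R] G) (g : G →ₗ[R] ResidueField R)
    (hf : Function.Injective f) (hg : Function.Surjective g)
    (hfg : LinearMap.range f = LinearMap.ker g)
    (h0 : Subsingleton (((Ext R (ModuleCat R) 0).obj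
      (Opposite.op (ModuleCat.of R (ResidueField R)))).obj (ModuleCat.of R R)))
    (h1 : Subsingleton (((Ext R (ModuleCat R) 1).obj
      (Opposite.op (ModuleCat.of R (ResidueField R)))).obj (ModuleCat.of R R))) :
    False := by
  -- Step 1: Hom(k, R) = 0
  have hk0 : ∀ φ : ResidueField R →ₗ[R] R, φ = 0 := by
    intro φ
    have := ext0_zero h0 (ModuleCat.ofHom φ)
    exact congrArg ModuleCat.Hom.hom this
  -- Step 2: f.dualMap surjective
  have hcomp : ∀ a : X, g (f a) = 0 := by
    intro a
    have : f a ∈ LinearMap.ker g := hfg ▸ LinearMap.mem_range_self f a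
    exact this
  have hsurj : Function.Surjective (f.dualMap : Module.Dual R G →ₗ[R] Module.Dual R X) := by
    intro φ
    obtain ⟨ψ, hψ⟩ := ext1_lift (A := ModuleCat.of R X) (B := ModuleCat.of R G)
      (M := ModuleCat.of R (ResidueField R)) (Y := ModuleCat.of R R)
      (ModuleCat.ofHom f) (ModuleCat.ofHom g) hf hg
      (fun b hb => by
        have : b ∈ LinearMap.range f := hfg ▸ hb
        exact this)
      hcomp h1 (ModuleCat.ofHom φ)
    exact ⟨ψ.hom, LinearMap.ext hψ⟩
  -- Step 3: f.dualMap injective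
  have hinj : Function.Injective (f.dualMap : Module.Dual R G →ₗ[R] Module.Dual R X) := by
    intro ψ1 ψ2 h12
    have hz : f.dualMap (ψ1 - ψ2) = 0 := by rw [map_sub, h12, sub_self]
    have hle : LinearMap.ker g ≤ LinearMap.ker (ψ1 - ψ2) := by
      rw [← hfg]
      rintro _ ⟨a, rfl⟩
      have : (ψ1 - ψ2) (f a) = (f.dualMap (ψ1 - ψ2)) a := rfl
      simp only [LinearMap.mem_ker, this, hz, LinearMap.zero_apply]
    have key : myFactor g hg (ψ1 - ψ2) hle = 0 := hk0 _
    have : ψ1 - ψ2 = 0 := by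
      ext b
      obtain ⟨y, hy⟩ : ∃ y, y = g b := ⟨g b, rfl⟩
      have := myFactor_comp g hg (ψ1 - ψ2) hle b
      rw [key] at this
      simpa using this.symm
    exact sub_eq_zero.mp this
  let e1 : Module.Dual R G ≃ₗ[R] Module.Dual R X := LinearEquiv.ofBijective _ ⟨hinj, hsurj⟩
  have he1 : ∀ χ, e1 χ = f.dualMap χ := fun _ => rfl
  -- Step 4: double dual map bijective
  have hq : Function.Bijective (f.dualMap.dualMap :
      Module.Dual R (Module.Dual R X) →ₗ[R] Module.Dual R (Module.Dual R G)) := by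
    constructor
    · intro u v huv
      ext χ
      have := congrArg (fun w => w (e1.symm χ)) huv
      have h2 : f.dualMap (e1.symm χ) = χ := by rw [← he1, e1.apply_symm_apply]
      simpa [LinearMap.dualMap_apply, h2] using this
    · intro ξ
      refine ⟨ξ ∘ₗ (e1.symm : Module.Dual R X →ₗ[R] Module.Dual R G), ?_⟩
      ext χ
      show ξ (e1.symm (f.dualMap χ)) = ξ χ
      rw [← he1, e1.symm_apply_apply]
  -- Step 5: naturality
  have hnat : ∀ x : X, f.dualMap.dualMap (Module.Dual.eval R X x)
      = Module.Dual.eval R G (f x) := fun x => by ext χ; rfl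
  have hXev : Function.Bijective (Module.Dual.eval R X) := Module.bijective_dual_eval R X
  -- Step 7: f surjective
  have hfsurj : Function.Surjective f := by
    intro y
    obtain ⟨u, hu⟩ := hq.2 (Module.Dual.eval R G y)
    obtain ⟨x, rfl⟩ := hXev.2 u
    exact ⟨x, hGev.1 (by rw [← hnat, hu])⟩
  -- Step 8: contradiction
  obtain ⟨y0, hy0⟩ := exists_ne (0 : ResidueField R)
  obtain ⟨b, hb⟩ := hg y0
  obtain ⟨a, ha⟩ := hfsurj b
  have hgb : g b = 0 := by
    have : b ∈ LinearMap.ker g := hfg ▸ ⟨a, ha⟩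
    exact this
  exact hy0 (by rw [← hb, hgb])


end StmtAux

/-- If over a non-regular Noetherian local ring the residue field `k` admits an exact
sequence `0 → X → G → k → 0` with `G` totally reflexive and `X` free of finite rank,
then `depth R ≤ 1`. -/
theorem stmt_16 (R : Type) [CommRing R] [IsNoetherianRing R] [IsLocalRing R]
    (hreg : ¬ IsRegularLocal R)
    (X G : Type) [AddCommGroup X] [Module R X] [Module.Finite R X] [Module.Free R X]
    [AddCommGroup G] [Module R G] [Module.Finite R G]
    (hG : IsTotallyReflexive R G)
    (f : X →ₗ[R] G) (g : G →ₗ[R] ResidueField R)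
    (hf : Function.Injective f) (hg : Function.Surjective g)
    (hfg : LinearMap.range f = LinearMap.ker g) :
    eDepth R R ≤ 1 := by
  by_cases h0 : Nontrivial (extGroup R (ResidueField R) R 0)
  · have h := sInf_le (s := (↑) '' {i : ℕ | Nontrivial (extGroup R (ResidueField R) R i)})
      (a := ((0 : ℕ) : ℕ∞)) ⟨0, h0, rfl⟩
    exact le_trans h (by norm_num)
  · by_cases h1 : Nontrivial (extGroup R (ResidueField R) R 1)
    · have h := sInf_le (s := (↑) '' {i : ℕ | Nontrivial (extGroup R (ResidueField R) R i)})
        (a := ((1 : ℕ) : ℕ∞)) ⟨1, h1, rfl⟩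
      exact le_trans h (by norm_num)
    · exfalso
      rw [not_nontrivial_iff_subsingleton] at h0 h1
      exact StmtAux.main_contra R X G hG.2.1 f g hf hg hfg h0 h1
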